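/- For any elements x, y of a Coxeter group W, the set {uy : u ≤ x} contains a unique minimal element in the Bruhat order. -/

import Mathlib

/-!
Write `x = s x'` with `s` simple and `ℓ x' < ℓ x`. Then `x` has a reduced word starting with
`s`, so by the subword property `{u ≤ x} = {u ≤ x'} ∪ s {u ≤ x'}`, and the set
`T(x, y) = {u y : u ≤ x}` is `T(x', y) ∪ s T(x', y)`. If `m'` is the Bruhat minimum of
`T(x', y)`, then the shorter of `m'` and `s m'` is the minimum of `T(x, y)`, by the lifting
property (`u ≤ w` and `u < s u` imply `u ≤ s w`). A minimum is the unique minimal element.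

The decomposition and the lifting property need the subword property for *every* reduced word.
It follows by identifying the subword order with the order generated by the relations
`w < t w` (`t` a reflection, `ℓ w < ℓ (t w)`), which rests on the strong exchange property. That
in turn comes from the reflection cocycle: the homomorphism `W → (W → ℤ/2) ⋊ W`,
`s ↦ (δ_s, s)`, whose first component at `t` counts the occurrences of `t` in the left inversion
sequence of any word, modulo 2.
-/

/-- The Bruhat order on a Coxeter group, via the subword property: `x ≤ y` iff some
reduced word for `y` has a subword whose product is `x`. -/
def CoxeterSystem.bruhatLE {B W : Type*} [Group W] {M : CoxeterMatrix B}
    (cs : CoxeterSystem M W) (x y : W) : Prop :=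
  ∃ ω ω' : List B, cs.IsReduced ω ∧ cs.wordProd ω = y ∧
    List.Sublist ω' ω ∧ cs.wordProd ω' = x

/-- The set of products `u * y` with `u ≤ x` in the Bruhat order. -/
def CoxeterSystem.triSet {B W : Type*} [Group W] {M : CoxeterMatrix B}
    (cs : CoxeterSystem M W) (x y : W) : Set W :=
  {w | ∃ u : W, cs.bruhatLE u x ∧ w = u * y}

theorem Finset.prod_range_two_mul {M : Type*} [CommMonoid M] (f : ℕ → M) (m : ℕ) :
    ∏ n ∈ Finset.range (2 * m), f n =
      ∏ k ∈ Finset.range m, (f (2 * k) * f (2 * k + 1)) := by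
  induction m with
  | zero => simp
  | succ m ih =>
    rw [Finset.prod_range_succ, ← ih, mul_add_one, Finset.prod_range_succ,
      Finset.prod_range_succ, mul_assoc]

theorem SemidirectProduct.left_pow {N G : Type*} [CommGroup N] [Group G] {φ : G →* MulAut N}
    (x : N ⋊[φ] G) (m : ℕ) :
    (x ^ m).left = ∏ k ∈ Finset.range m, φ (x.right ^ k) x.left := by
  induction m with
  | zero => simp
  | succ m ih =>
    rw [pow_succ, mul_left, ih, Finset.prod_range_succ, ← rightHom_eq_right, map_pow]

def conjIndexAut (G M : Type*) [Group G] [Monoid M] : G →* MulAut (G → M) where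
  toFun g :=
    { toFun := fun f t => f (g⁻¹ * t * g)
      invFun := fun f t => f (g * t * g⁻¹)
      left_inv := fun f => by funext t; simp [mul_assoc]
      right_inv := fun f => by funext t; simp [mul_assoc]
      map_mul' := fun _ _ => rfl }
  map_one' := by ext; simp
  map_mul' _ _ := by ext; simp [mul_assoc]

theorem conjIndexAut_apply {G M : Type*} [Group G] [Monoid M] (g : G) (f : G → M) (t : G) :
    conjIndexAut G M g f t = f (g⁻¹ * t * g) := rfl

theorem conjIndexAut_mulSingle {G M : Type*} [Group G] [Monoid M] [DecidableEq G] (g t : G)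
    (x : M) : conjIndexAut G M g (Pi.mulSingle t x) = Pi.mulSingle (g * t * g⁻¹) x := by
  funext u
  have : g⁻¹ * u * g = t ↔ u = g * t * g⁻¹ := by
    constructor <;> rintro rfl <;> group
  simp only [conjIndexAut_apply, Pi.mulSingle_apply, this]

namespace CoxeterSystem

open List

variable {B W : Type*} [Group W] {M : CoxeterMatrix B} (cs : CoxeterSystem M W)

local prefix:100 "s" => cs.simple
local prefix:100 "π" => cs.wordProd
local prefix:100 "ℓ" => cs.length
local prefix:100 "lis " => cs.leftInvSeq

section ReflectionCocycle

open scoped Classical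

abbrev SignGroup (W : Type*) [Group W] :=
  (W → Multiplicative (ZMod 2)) ⋊[conjIndexAut W (Multiplicative (ZMod 2))] W

noncomputable def signedSimple (i : B) : SignGroup W :=
  ⟨Pi.mulSingle (s i) (.ofAdd 1), s i⟩

theorem isLiftable_signedSimple : M.IsLiftable cs.signedSimple := by
  intro i j
  set a := s i * s j
  set δ : ℕ → W → Multiplicative (ZMod 2) := fun n => Pi.mulSingle (a ^ n * s i) (.ofAdd 1)
  have hflip (k : ℕ) : s i * (a ^ k)⁻¹ = a ^ k * s i := by
    have : SemiconjBy (s i) a⁻¹ a := by simp [SemiconjBy, a, mul_assoc]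
    rw [← inv_pow]
    exact (this.pow_right k).eq
  have hconj (k n : ℕ) : conjIndexAut W _ (a ^ k) (δ n) = δ (2 * k + n) := by
    simp only [δ, conjIndexAut_mulSingle, mul_assoc, hflip]
    rw [← mul_assoc (a ^ n), ← pow_add, ← mul_assoc, ← pow_add]
    ring_nf
  have hprod : cs.signedSimple i * cs.signedSimple j = ⟨δ 0 * δ 1, a⟩ := by
    ext1
    · simp [signedSimple, conjIndexAut_mulSingle, δ, a, mul_assoc]
    · rfl
  have ha : a ^ M i j = 1 := cs.simple_mul_simple_pow i j
  have hsq (f : W → Multiplicative (ZMod 2)) : f * f = 1 := by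
    funext t
    exact (by decide : ∀ z : Multiplicative (ZMod 2), z * z = 1) (f t)
  rw [hprod]
  ext1
  · rw [SemidirectProduct.left_pow, SemidirectProduct.one_left]
    calc ∏ k ∈ Finset.range (M i j), conjIndexAut W _ (a ^ k) (δ 0 * δ 1)
        = ∏ n ∈ Finset.range (2 * M i j), δ n := by
          simp only [map_mul, hconj, Finset.prod_range_two_mul, add_zero]
      _ = (∏ n ∈ Finset.range (M i j), δ n) * ∏ n ∈ Finset.range (M i j), δ n := by
          rw [two_mul, Finset.prod_range_add]
          simp [δ, pow_add, ha]
      _ = 1 := hsq _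
  · rw [← SemidirectProduct.rightHom_eq_right, map_pow]
    exact ha

noncomputable def signedHom : W →* SignGroup W :=
  cs.lift ⟨cs.signedSimple, cs.isLiftable_signedSimple⟩

theorem right_signedHom (w : W) : (cs.signedHom w).right = w := by
  have : SemidirectProduct.rightHom.comp cs.signedHom = MonoidHom.id W :=
    cs.ext_simple fun i => by simp [signedHom, signedSimple, cs.lift_apply_simple]
  exact DFunLike.congr_fun this w

noncomputable def reflectionCocycle (w t : W) : ZMod 2 :=
  Multiplicative.toAdd ((cs.signedHom w).left t)

local notation "η" => cs.reflectionCocycle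

theorem reflectionCocycle_one (t : W) : η 1 t = 0 := by
  simp [reflectionCocycle]

theorem reflectionCocycle_mul (u v t : W) : η (u * v) t = η u t + η v (u⁻¹ * t * u) := by
  simp only [reflectionCocycle, map_mul, SemidirectProduct.mul_left, right_signedHom]
  rfl

theorem reflectionCocycle_simple (i : B) (t : W) : η (s i) t = if t = s i then 1 else 0 := by
  simp only [reflectionCocycle, signedHom, cs.lift_apply_simple, signedSimple,
    Pi.mulSingle_apply]
  split_ifs <;> rfl

theorem reflectionCocycle_wordProd (ω : List B) (t : W) : η (π ω) t = (lis ω).count t := by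
  induction ω generalizing t with
  | nil => simp [reflectionCocycle_one]
  | cons i ω ih =>
    have hmap : (map (MulAut.conj (s i)) (lis ω)).count t = (lis ω).count (s i * t * s i) := by
      conv_lhs => rw [show t = MulAut.conj (s i) (s i * t * s i) by simp [mul_assoc]]
      exact count_map_of_injective _ _ (MulAut.conj (s i)).injective _
    rw [wordProd_cons, reflectionCocycle_mul, reflectionCocycle_simple, inv_simple, ih,
      leftInvSeq, count_cons, hmap]
    by_cases h : t = s i
    · simp [h, add_comm]
    · simp [h, Ne.symm h]

theorem reflectionCocycle_inv (w t : W) : η w⁻¹ (w⁻¹ * t * w) = η w t := by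
  have h := cs.reflectionCocycle_mul w w⁻¹ t
  rw [mul_inv_cancel, reflectionCocycle_one] at h
  grind

variable {cs} in
theorem IsReflection.reflectionCocycle_self {t : W} (ht : cs.IsReflection t) : η t t = 1 := by
  obtain ⟨w, i, rfl⟩ := ht
  have h₁ : w⁻¹ * (w * s i * w⁻¹) * w = s i := by group
  have h₂ : (w * s i)⁻¹ * (w * s i * w⁻¹) * (w * s i) = s i := by group
  have h₃ := cs.reflectionCocycle_inv w (w * s i * w⁻¹)
  rw [h₁] at h₃
  rw [reflectionCocycle_mul, reflectionCocycle_mul, h₁, h₂, h₃, reflectionCocycle_simple,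
    if_pos rfl]
  generalize η w _ = x
  revert x
  decide

theorem mem_leftInvSeq_of_reflectionCocycle_eq_one {ω : List B} {t : W}
    (h : η (π ω) t = 1) : t ∈ lis ω := by
  rw [reflectionCocycle_wordProd] at h
  exact count_pos_iff.mp (Nat.pos_of_ne_zero fun h0 => by simp [h0] at h)

theorem length_mul_lt_of_reflectionCocycle_eq_one {w t : W} (h : η w t = 1) :
    ℓ (t * w) < ℓ w := by
  obtain ⟨ω, hω, rfl⟩ := cs.exists_isReduced w
  exact (cs.isLeftInversion_of_mem_leftInvSeq hω
    (cs.mem_leftInvSeq_of_reflectionCocycle_eq_one h)).2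

variable {cs} in
theorem IsReflection.reflectionCocycle_eq_one {w t : W} (ht : cs.IsReflection t)
    (h : ℓ (t * w) < ℓ w) : η w t = 1 := by
  have hsplit := cs.reflectionCocycle_mul t (t * w) t
  rw [← mul_assoc, ht.mul_self, one_mul, ht.reflectionCocycle_self, inv_mul_cancel,
    one_mul] at hsplit
  have hne : η (t * w) t ≠ 1 := fun h' => by
    have := cs.length_mul_lt_of_reflectionCocycle_eq_one h'
    rw [← mul_assoc, ht.mul_self, one_mul] at this
    omega
  rw [hsplit]
  generalize η (t * w) t = x at hne
  revert x
  decide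

end ReflectionCocycle

variable {cs} in
/-- The strong exchange property, for arbitrary words. -/
theorem IsReflection.exists_eraseIdx {ω : List B} {t : W} (ht : cs.IsReflection t)
    (h : ℓ (t * π ω) < ℓ (π ω)) : ∃ j < ω.length, t * π ω = π (ω.eraseIdx j) := by
  classical
  obtain ⟨j, hj, rfl⟩ := List.getElem_of_mem
    (cs.mem_leftInvSeq_of_reflectionCocycle_eq_one (ht.reflectionCocycle_eq_one h))
  refine ⟨j, by simpa using hj, ?_⟩
  rw [← List.getD_eq_getElem _ 1 hj, getD_leftInvSeq_mul_wordProd]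

variable {cs} in
theorem IsReduced.tail {i : B} {ω : List B} (h : cs.IsReduced (i :: ω)) : cs.IsReduced ω := by
  simpa using h.drop 1

theorem isReduced_cons_iff {i : B} {ω : List B} (hω : cs.IsReduced ω) :
    cs.IsReduced (i :: ω) ↔ ℓ (π ω) < ℓ (s i * π ω) := by
  have := hω.eq
  rcases cs.length_simple_mul (π ω) i with h | h <;>
    simp only [IsReduced, wordProd_cons, length_cons] <;> omega

theorem exists_isReduced_sublist (ω : List B) :
    ∃ σ, σ <+ ω ∧ cs.IsReduced σ ∧ π σ = π ω := by
  induction ω with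
  | nil => exact ⟨[], Sublist.slnil, by simp [IsReduced], rfl⟩
  | cons i ω ih =>
    obtain ⟨σ, hσ, hred, hprod⟩ := ih
    rcases cs.length_simple_mul (π σ) i with hup | hdown
    · refine ⟨i :: σ, hσ.cons_cons i, (cs.isReduced_cons_iff hred).mpr (by omega), ?_⟩
      rw [wordProd_cons, wordProd_cons, hprod]
    · obtain ⟨j, hj, hje⟩ := (cs.isReflection_simple i).exists_eraseIdx (ω := σ) (by omega)
      refine ⟨σ.eraseIdx j, ((eraseIdx_sublist σ j).trans hσ).trans (sublist_cons_self i ω),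
        ?_, by rw [← hje, hprod, wordProd_cons]⟩
      have hlen := length_eraseIdx_add_one hj
      have hσℓ := hred.eq
      rw [IsReduced, ← hje]
      omega

theorem exists_isReduced_cons_of_length_simple_mul_lt {i : B} {w : W} (h : ℓ (s i * w) < ℓ w) :
    ∃ ρ, cs.IsReduced (i :: ρ) ∧ π (i :: ρ) = w := by
  obtain ⟨ρ, hρ, hρw⟩ := cs.exists_isReduced (s i * w)
  have hw : π (i :: ρ) = w := by rw [wordProd_cons, ← hρw, simple_mul_simple_cancel_left]
  refine ⟨ρ, (cs.isReduced_cons_iff hρ).mpr ?_, hw⟩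
  rwa [← wordProd_cons, hw, ← hρw]

theorem exists_sublist_cons_wordProd_eq_simple_mul {i : B} {ρ σ : List B} (h : σ <+ i :: ρ) :
    ∃ σ', σ' <+ i :: ρ ∧ π σ' = s i * π σ := by
  rcases sublist_cons_iff.mp h with h | ⟨τ, rfl, hτ⟩
  · exact ⟨i :: σ, h.cons_cons i, wordProd_cons ..⟩
  · exact ⟨τ, hτ.cons i, by rw [wordProd_cons, simple_mul_simple_cancel_left]⟩

theorem bruhatLE_refl (w : W) : cs.bruhatLE w w := by
  obtain ⟨ω, hω, rfl⟩ := cs.exists_isReduced w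
  exact ⟨ω, ω, hω, rfl, Sublist.refl ω, rfl⟩

def BruhatStep (a b : W) : Prop :=
  ∃ t, cs.IsReflection t ∧ b = t * a ∧ ℓ a < ℓ b

def ChainLE : W → W → Prop :=
  Relation.ReflTransGen cs.BruhatStep

variable {cs}

theorem BruhatStep.chainLE {a b : W} (h : cs.BruhatStep a b) : cs.ChainLE a b :=
  .single h

theorem ChainLE.trans {a b c : W} (h₁ : cs.ChainLE a b) (h₂ : cs.ChainLE b c) :
    cs.ChainLE a c :=
  Relation.ReflTransGen.trans h₁ h₂

theorem bruhatStep_simple_mul {i : B} {w : W} (h : ℓ w < ℓ (s i * w)) :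
    cs.BruhatStep w (s i * w) :=
  ⟨s i, cs.isReflection_simple i, rfl, h⟩

theorem IsReflection.bruhatStep_mul {t u : W} (ht : cs.IsReflection t) (h : ℓ (t * u) < ℓ u) :
    cs.BruhatStep (t * u) u :=
  ⟨t, ht, by rw [← mul_assoc, ht.mul_self, one_mul], h⟩

theorem BruhatStep.simple_mul_chainLE {i : B} {a b : W} (h : cs.BruhatStep a b)
    (hb : ℓ b < ℓ (s i * b)) : cs.ChainLE (s i * a) (s i * b) := by
  obtain ⟨t, ht, rfl, hab⟩ := h
  rcases cs.length_simple_mul a i with ha | ha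
  · refine BruhatStep.chainLE ⟨s i * t * s i, ?_, by simp [mul_assoc], by omega⟩
    simpa using ht.conj (s i)
  · have hdown : cs.BruhatStep (s i * a) a :=
      (cs.isReflection_simple i).bruhatStep_mul (by omega)
    exact hdown.chainLE.trans (BruhatStep.chainLE ⟨t, ht, rfl, hab⟩ |>.trans
      (bruhatStep_simple_mul hb).chainLE)

theorem ChainLE.exists_sublist {u w : W} (h : cs.ChainLE u w) {ω : List B} (hω : π ω = w) :
    ∃ σ, σ <+ ω ∧ π σ = u := by
  induction h generalizing ω with
  | refl => exact ⟨ω, Sublist.refl ω, hω⟩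
  | @tail c w _ hstep ih =>
    obtain ⟨t, ht, rfl, hlt⟩ := hstep
    have hc : c = t * π ω := by rw [hω, ← mul_assoc, ht.mul_self, one_mul]
    obtain ⟨j, -, hj⟩ := ht.exists_eraseIdx (ω := ω) (by rwa [← hc, hω])
    obtain ⟨σ, hσ, hσc⟩ := ih (hc.trans hj).symm
    exact ⟨σ, hσ.trans (eraseIdx_sublist ω j), hσc⟩

/-- The lifting property, assuming the converse of `ChainLE.exists_sublist` for shorter reduced
words; the two are established together by induction on the length. -/
theorem ChainLE.simple_mul_of_forall_sublist {i : B} {N : ℕ}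
    (hsub : ∀ ω σ : List B, cs.IsReduced ω → ω.length < N → σ <+ ω →
      cs.ChainLE (π σ) (π ω))
    {u v : W} (h : cs.ChainLE u v) (hvN : ℓ v ≤ N) (hv : ℓ v < ℓ (s i * v)) :
    cs.ChainLE (s i * u) (s i * v) := by
  induction h with
  | refl => exact .refl
  | @tail c v hchain hstep ih =>
    have hcv : ℓ c < ℓ v := by
      obtain ⟨-, -, -, h⟩ := hstep
      exact h
    rcases cs.length_simple_mul c i with hc | hc
    · exact (ih (by omega) (by omega)).trans (hstep.simple_mul_chainLE hv)
    obtain ⟨ρ, hρ, hρc⟩ :=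
      cs.exists_isReduced_cons_of_length_simple_mul_lt (i := i) (w := c) (by omega)
    obtain ⟨σ, hσ, rfl⟩ := ChainLE.exists_sublist hchain hρc
    obtain ⟨σ', hσ', hσ'u⟩ := cs.exists_sublist_cons_wordProd_eq_simple_mul hσ
    have hsu : cs.ChainLE (s i * π σ) c := by
      rw [← hσ'u, ← hρc]
      exact hsub _ _ hρ (by rw [← hρ.eq, hρc]; omega) hσ'
    exact hsu.trans (hstep.chainLE.trans (bruhatStep_simple_mul hv).chainLE)

theorem chainLE_wordProd_of_sublist_of_length_lt (N : ℕ) :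
    ∀ ω σ : List B, cs.IsReduced ω → ω.length < N → σ <+ ω →
      cs.ChainLE (π σ) (π ω) := by
  induction N with
  | zero => intros; omega
  | succ N ih =>
    intro ω σ hω hN h
    rcases ω with _ | ⟨i, ρ⟩
    · rw [sublist_nil.mp h]
      exact .refl
    have hup := (cs.isReduced_cons_iff hω.tail).mp hω
    have hρN : ρ.length < N := by simpa using hN
    rw [wordProd_cons]
    rcases sublist_cons_iff.mp h with h | ⟨τ, rfl, hτ⟩
    · exact (ih ρ σ hω.tail hρN h).trans (bruhatStep_simple_mul hup).chainLE
    · rw [wordProd_cons]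
      exact (ih ρ τ hω.tail hρN hτ).simple_mul_of_forall_sublist ih
        (by rw [hω.tail.eq]; omega) hup

theorem chainLE_wordProd_of_sublist {ω σ : List B} (hω : cs.IsReduced ω) (h : σ <+ ω) :
    cs.ChainLE (π σ) (π ω) :=
  chainLE_wordProd_of_sublist_of_length_lt _ ω σ hω (Nat.lt_succ_self _) h

theorem bruhatLE_iff_chainLE {u w : W} : cs.bruhatLE u w ↔ cs.ChainLE u w := by
  constructor
  · rintro ⟨ω, σ, hω, rfl, hσ, rfl⟩
    exact chainLE_wordProd_of_sublist hω hσ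
  · intro h
    obtain ⟨ω, hω, rfl⟩ := cs.exists_isReduced w
    obtain ⟨σ, hσ, rfl⟩ := h.exists_sublist rfl
    exact ⟨ω, σ, hω, rfl, hσ, rfl⟩

theorem bruhatLE.exists_isReduced_sublist {u w : W} (h : cs.bruhatLE u w) {ω : List B}
    (hω : π ω = w) : ∃ σ, σ <+ ω ∧ cs.IsReduced σ ∧ π σ = u := by
  obtain ⟨σ, hσ, rfl⟩ := (bruhatLE_iff_chainLE.mp h).exists_sublist hω
  obtain ⟨τ, hτ, hτred, hτσ⟩ := cs.exists_isReduced_sublist σ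
  exact ⟨τ, hτ.trans hσ, hτred, hτσ⟩

theorem bruhatLE.length_lt_of_ne {u w : W} (h : cs.bruhatLE u w) (hne : u ≠ w) :
    ℓ u < ℓ w := by
  obtain ⟨ω, σ, hω, rfl, hσ, rfl⟩ := h
  calc ℓ (π σ) ≤ σ.length := cs.length_wordProd_le σ
    _ < ω.length := lt_of_le_of_ne hσ.length_le fun hlen => hne (by rw [hσ.eq_of_length hlen])
    _ = ℓ (π ω) := hω.eq.symm

theorem bruhatLE.antisymm {u w : W} (h₁ : cs.bruhatLE u w) (h₂ : cs.bruhatLE w u) : u = w := by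
  by_contra hne
  have := h₁.length_lt_of_ne hne
  have := h₂.length_lt_of_ne (Ne.symm hne)
  omega

theorem bruhatLE.mul_left_of_length_lt {t u w : W} (h : cs.bruhatLE u w)
    (ht : cs.IsReflection t) (hu : ℓ (t * u) < ℓ u) : cs.bruhatLE (t * u) w :=
  bruhatLE_iff_chainLE.mpr ((ht.bruhatStep_mul hu).chainLE.trans (bruhatLE_iff_chainLE.mp h))

theorem bruhatLE.le_simple_mul {i : B} {u w : W} (h : cs.bruhatLE u w)
    (hu : ℓ u < ℓ (s i * u)) : cs.bruhatLE u (s i * w) := by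
  rcases cs.length_simple_mul w i with hw | hw
  · obtain ⟨ω, hω, rfl⟩ := cs.exists_isReduced w
    obtain ⟨σ, hσ, -, rfl⟩ := h.exists_isReduced_sublist rfl
    exact ⟨i :: ω, σ, (cs.isReduced_cons_iff hω).mpr (by omega), wordProd_cons ..,
      hσ.cons i, rfl⟩
  · obtain ⟨ρ, hρ, hρw⟩ :=
      cs.exists_isReduced_cons_of_length_simple_mul_lt (i := i) (w := w) (by omega)
    obtain ⟨σ, hσ, hσred, rfl⟩ := h.exists_isReduced_sublist hρw
    have hsw : π ρ = s i * w := by rw [← hρw, wordProd_cons, simple_mul_simple_cancel_left]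
    rcases sublist_cons_iff.mp hσ with hσ | ⟨τ, rfl, hτ⟩
    · exact ⟨ρ, σ, hρ.tail, hsw, hσ, rfl⟩
    · have hred := hσred.eq
      have hle := cs.length_wordProd_le τ
      simp only [wordProd_cons, simple_mul_simple_cancel_left, length_cons] at hu hred
      omega

theorem bruhatLE_wordProd_cons_iff {i : B} {ρ : List B} (h : cs.IsReduced (i :: ρ)) {u : W} :
    cs.bruhatLE u (π (i :: ρ)) ↔ cs.bruhatLE u (π ρ) ∨ cs.bruhatLE (s i * u) (π ρ) := by
  constructor
  · intro hu
    obtain ⟨σ, hσ, -, rfl⟩ := hu.exists_isReduced_sublist rfl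
    rcases sublist_cons_iff.mp hσ with hσ | ⟨τ, rfl, hτ⟩
    · exact .inl ⟨ρ, σ, h.tail, rfl, hσ, rfl⟩
    · refine .inr ⟨ρ, τ, h.tail, rfl, hτ, ?_⟩
      rw [wordProd_cons, simple_mul_simple_cancel_left]
  · rintro (hu | hu)
    · obtain ⟨σ, hσ, -, rfl⟩ := hu.exists_isReduced_sublist rfl
      exact ⟨i :: ρ, σ, h, rfl, hσ.cons i, rfl⟩
    · obtain ⟨σ, hσ, -, hσu⟩ := hu.exists_isReduced_sublist rfl
      refine ⟨i :: ρ, i :: σ, h, rfl, hσ.cons_cons i, ?_⟩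
      rw [wordProd_cons, hσu, simple_mul_simple_cancel_left]

theorem mem_triSet_iff {x y z : W} : z ∈ cs.triSet x y ↔ cs.bruhatLE (z * y⁻¹) x := by
  constructor
  · rintro ⟨u, hu, rfl⟩
    simpa using hu
  · exact fun h => ⟨_, h, by group⟩

theorem mem_triSet_wordProd_cons_iff {i : B} {ρ : List B} (h : cs.IsReduced (i :: ρ))
    {y z : W} :
    z ∈ cs.triSet (π (i :: ρ)) y ↔
      z ∈ cs.triSet (π ρ) y ∨ s i * z ∈ cs.triSet (π ρ) y := by
  simp only [mem_triSet_iff, bruhatLE_wordProd_cons_iff h, mul_assoc]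

theorem exists_bruhatLE_forall_mem_triSet_wordProd {ω : List B} (hω : cs.IsReduced ω) (y : W) :
    ∃ m ∈ cs.triSet (π ω) y, ∀ z ∈ cs.triSet (π ω) y, cs.bruhatLE m z := by
  induction ω with
  | nil =>
    refine ⟨y, mem_triSet_iff.mpr ?_, fun z hz => ?_⟩
    · rw [mul_inv_cancel]
      exact ⟨[], [], hω, rfl, .slnil, rfl⟩
    · obtain ⟨σ, hσ, -, hσz⟩ := (mem_triSet_iff.mp hz).exists_isReduced_sublist rfl
      rw [sublist_nil.mp hσ, wordProd_nil, eq_comm, mul_inv_eq_one] at hσz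
      rw [hσz]
      exact cs.bruhatLE_refl y
  | cons i ρ ih =>
    obtain ⟨m', hm'T, hm'⟩ := ih hω.tail
    obtain ⟨m, hmT, hm, hlen⟩ : ∃ m ∈ cs.triSet (π (i :: ρ)) y,
        (∀ z ∈ cs.triSet (π ρ) y, cs.bruhatLE m z) ∧ ℓ m < ℓ (s i * m) := by
      rcases cs.length_simple_mul m' i with h | h
      · exact ⟨m', (mem_triSet_wordProd_cons_iff hω).mpr (.inl hm'T), hm', by omega⟩
      · refine ⟨s i * m', (mem_triSet_wordProd_cons_iff hω).mpr (.inr ?_), fun z hz =>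
          (hm' z hz).mul_left_of_length_lt (cs.isReflection_simple i) (by omega), ?_⟩
        · rwa [simple_mul_simple_cancel_left]
        · rw [simple_mul_simple_cancel_left]
          omega
    refine ⟨m, hmT, fun z hz => ?_⟩
    rcases (mem_triSet_wordProd_cons_iff hω).mp hz with hz | hz
    · exact hm z hz
    · simpa using (hm _ hz).le_simple_mul (i := i) hlen

end CoxeterSystem

/-- For any `x, y` in a Coxeter group, the set `{u * y : u ≤ x}` contains a unique minimal
element in the Bruhat order. -/
theorem triSet_exists_unique_minimal {B W : Type*} [Group W] {M : CoxeterMatrix B} (cs : CoxeterSystem M W) (x y : W) :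
    ∃! m : W, m ∈ cs.triSet x y ∧ ∀ z ∈ cs.triSet x y, cs.bruhatLE z m → z = m := by
  obtain ⟨ω, hω, rfl⟩ := cs.exists_isReduced x
  obtain ⟨m, hmT, hm⟩ := cs.exists_bruhatLE_forall_mem_triSet_wordProd hω y
  refine ⟨m, ⟨hmT, fun z hz hzm => hzm.antisymm (hm z hz)⟩, ?_⟩
  rintro m' ⟨hm'T, hm'⟩
  exact (hm' m hmT (hm m' hm'T)).symm
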